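/- Let d ≥ 1 and let q > d/2, and define S̄ := sup_{x∈ℤ^d} ∑_{y∈ℤ^d} (|y|+1)^{−q}(|x−y|+1)^{−q}, which is finite. Then there is a constant C depending only on d and q such that for all x, y ∈ ℤ^d, ∑_{u∈ℤ^d} (|u|+1)^{−2q}(|x−u|+1)^{−q}(|y−u|+1)^{−q} ≤ C S̄ (|x|+1)^{−q}(|y|+1)^{−q}. -/

import Mathlib

/-!
Since `|x| + 1 ≤ (|u| + 1) + (|x - u| + 1)`, one of the two weights on the right is at least
`(|x| + 1) / 2`, whence
`(|u|+1)^{-q} (|x-u|+1)^{-q} ≤ 2^q (|x|+1)^{-q} ((|u|+1)^{-q} + (|x-u|+1)^{-q})`.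
Multiplying this bound for `x` and for `y` and expanding, the sum splits into four convolutions
of two weights, each at most `S̄` after a translation of `u`; this gives `C = 4 · 4^q`.

`S̄` is finite: `ab ≤ a² + b²` bounds it by `2 ∑_u (|u|+1)^{-2q}`, and
`(|u|+1)^{-2q} ≤ ∏_i (|u_i|+1)^{-2q/d}` reduces this sum to the `d`-th power of a
one-dimensional `p`-series with `p = 2q/d > 1`.
-/

open scoped BigOperators ENNReal

/-- Points of `ℤ^d`. -/
abbrev V (d : ℕ) := Fin d → ℤ

/-- The Euclidean norm of a point of `ℤ^d`. -/
noncomputable def znorm {d : ℕ} (x : V d) : ℝ :=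
  Real.sqrt (∑ i, ((x i : ℝ)) ^ 2)

/-- The weight `|x| + 1`, as an extended nonnegative real. -/
noncomputable def w {d : ℕ} (x : V d) : ℝ≥0∞ := ENNReal.ofReal (znorm x + 1)

/-- The bubble quantity `S̄ = sup_x ∑_y (|y|+1)^{−q} (|x−y|+1)^{−q}`. -/
noncomputable def Sbar (d : ℕ) (q : ℝ) : ℝ≥0∞ :=
  ⨆ x : V d, ∑' y : V d, w y ^ (-q) * w (x - y) ^ (-q)

namespace ENNReal

lemma rpow_neg_le_rpow_neg {a b : ℝ≥0∞} {q : ℝ} (hq : 0 ≤ q) (h : a ≤ b) :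
    b ^ (-q) ≤ a ^ (-q) := by
  rw [rpow_neg, rpow_neg]
  exact ENNReal.inv_le_inv.mpr (rpow_le_rpow h hq)

lemma rpow_neg_le_two_rpow_mul_rpow_neg {b c : ℝ≥0∞} {q : ℝ} (hq : 0 ≤ q) (hc : c ≤ 2 * b) :
    b ^ (-q) ≤ 2 ^ q * c ^ (-q) :=
  calc b ^ (-q) = 2 ^ q * (2 * b) ^ (-q) := by
        rw [rpow_neg, rpow_neg, mul_rpow_of_nonneg _ _ hq,
          ENNReal.mul_inv (.inl (by positivity)) (.inl (by simp)), ← mul_assoc,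
          ENNReal.mul_inv_cancel (by positivity) (by simp), one_mul]
    _ ≤ 2 ^ q * c ^ (-q) := mul_le_mul_right (rpow_neg_le_rpow_neg hq hc) _

/-- Of two weights whose sum dominates `c`, the larger is at least `c / 2`. -/
lemma rpow_neg_mul_rpow_neg_le {a b c : ℝ≥0∞} {q : ℝ} (hq : 0 ≤ q) (hc : c ≤ a + b) :
    a ^ (-q) * b ^ (-q) ≤ 2 ^ q * c ^ (-q) * (a ^ (-q) + b ^ (-q)) := by
  wlog hab : a ≤ b generalizing a b
  · simpa only [mul_comm, add_comm] using this (add_comm a b ▸ hc) (le_of_not_ge hab)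
  have hb : b ^ (-q) ≤ 2 ^ q * c ^ (-q) :=
    rpow_neg_le_two_rpow_mul_rpow_neg hq (hc.trans (by rw [two_mul]; gcongr))
  calc a ^ (-q) * b ^ (-q) ≤ a ^ (-q) * (2 ^ q * c ^ (-q)) := by gcongr
    _ ≤ 2 ^ q * c ^ (-q) * (a ^ (-q) + b ^ (-q)) := by rw [mul_comm]; gcongr; exact le_self_add

lemma mul_le_mul_self_add_mul_self (a b : ℝ≥0∞) : a * b ≤ a * a + b * b := by
  rcases le_total a b with h | h
  · exact (mul_le_mul_left h b).trans le_add_self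
  · exact (mul_le_mul_right h a).trans le_self_add

lemma tsum_pi_prod_eq_pow {α : Type*} (g : α → ℝ≥0∞) (n : ℕ) :
    ∑' u : Fin n → α, ∏ i, g (u i) = (∑' a, g a) ^ n := by
  induction n with
  | zero => simp
  | succ n ih =>
    rw [← (Fin.consEquiv fun _ => α).tsum_eq, ENNReal.tsum_prod', pow_succ', ← ih,
      ← ENNReal.tsum_mul_right]
    refine tsum_congr fun a => ?_
    rw [← ENNReal.tsum_mul_left]
    simp [Fin.prod_univ_succ]

end ENNReal

section Weight

variable {d : ℕ}

lemma znorm_eq_norm (x : V d) :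
    znorm x = ‖(WithLp.toLp 2 fun i => (x i : ℝ) : EuclideanSpace ℝ (Fin d))‖ := by
  simp [znorm, EuclideanSpace.norm_eq]

lemma znorm_nonneg (x : V d) : 0 ≤ znorm x := Real.sqrt_nonneg _

@[simp]
lemma znorm_neg (x : V d) : znorm (-x) = znorm x := by simp [znorm]

lemma znorm_add_le (x y : V d) : znorm (x + y) ≤ znorm x + znorm y := by
  simp only [znorm_eq_norm, Pi.add_apply, Int.cast_add]
  exact norm_add_le (WithLp.toLp 2 fun i => (x i : ℝ)) (WithLp.toLp 2 fun i => (y i : ℝ))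

lemma abs_le_znorm (x : V d) (i : Fin d) : |(x i : ℝ)| ≤ znorm x := by
  rw [znorm, ← Real.sqrt_sq_eq_abs]
  exact Real.sqrt_le_sqrt (Finset.single_le_sum (fun j _ => sq_nonneg (x j : ℝ))
    (Finset.mem_univ i))

lemma one_le_w (x : V d) : 1 ≤ w x :=
  ENNReal.one_le_ofReal.mpr (by linarith [znorm_nonneg x])

lemma w_ne_zero (x : V d) : w x ≠ 0 := (zero_lt_one.trans_le (one_le_w x)).ne'

lemma w_ne_top (x : V d) : w x ≠ ⊤ := ENNReal.ofReal_ne_top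

@[simp]
lemma w_neg (x : V d) : w (-x) = w x := by rw [w, w, znorm_neg]

lemma w_le_add_w_sub (x u : V d) : w x ≤ w u + w (x - u) := by
  rw [w, w, w, ← ENNReal.ofReal_add (by linarith [znorm_nonneg u])
    (by linarith [znorm_nonneg (x - u)])]
  refine ENNReal.ofReal_le_ofReal ?_
  linarith [add_sub_cancel u x ▸ znorm_add_le u (x - u)]

lemma w_rpow_neg_two_mul (x : V d) (q : ℝ) : w x ^ (-(2 * q)) = w x ^ (-q) * w x ^ (-q) := by
  rw [← ENNReal.rpow_add _ _ (w_ne_zero x) (w_ne_top x)]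
  ring_nf

end Weight

section Bubble

variable {d : ℕ}

lemma tsum_w_sub_mul_w_sub_le_Sbar (q : ℝ) (a b : V d) :
    ∑' u : V d, w (a - u) ^ (-q) * w (b - u) ^ (-q) ≤ Sbar d q := by
  have hshift : ∀ v : V d, b - (a - v) = -((a - b) - v) := fun v => by abel
  rw [← (Equiv.subLeft a).tsum_eq]
  simp only [Equiv.subLeft_apply, sub_sub_cancel, hshift, w_neg]
  exact le_iSup (fun x : V d => ∑' y : V d, w y ^ (-q) * w (x - y) ^ (-q)) (a - b)

lemma tsum_add_mul_add_le_four_mul_Sbar (q : ℝ) (x y : V d) :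
    ∑' u : V d, (w u ^ (-q) + w (x - u) ^ (-q)) * (w u ^ (-q) + w (y - u) ^ (-q)) ≤
      4 * Sbar d q := by
  have hS := tsum_w_sub_mul_w_sub_le_Sbar (d := d) q
  have h0 : ∀ b : V d, ∑' u : V d, w u ^ (-q) * w (b - u) ^ (-q) ≤ Sbar d q := by
    simpa using hS 0
  have h00 : ∑' u : V d, w u ^ (-q) * w u ^ (-q) ≤ Sbar d q := by simpa using hS 0 0
  simp only [add_mul, mul_add, ENNReal.tsum_add]
  calc _ ≤ Sbar d q + Sbar d q + (Sbar d q + Sbar d q) :=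
        add_le_add (add_le_add h00 (by simpa only [mul_comm] using h0 x))
          (add_le_add (h0 y) (hS x y))
    _ = 4 * Sbar d q := by ring

end Bubble

section Finiteness

lemma summable_abs_add_one_rpow_neg {p : ℝ} (hp : 1 < p) :
    Summable fun k : ℤ => (|(k : ℝ)| + 1) ^ (-p) := by
  have hnat : Summable fun n : ℕ => ((n : ℝ) + 1) ^ (-p) := by
    simpa using (summable_nat_add_iff 1).mpr (Real.summable_nat_rpow.mpr (neg_lt_neg hp))
  exact .of_nat_of_neg (by simpa using hnat) (by simpa using hnat)

variable {d : ℕ}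

lemma w_rpow_neg_le_prod (hd : d ≠ 0) {s : ℝ} (hs : 0 ≤ s) (u : V d) :
    w u ^ (-s) ≤ ∏ i, ENNReal.ofReal ((|(u i : ℝ)| + 1) ^ (-(s / d))) := by
  have hsplit : w u ^ (-s) = ∏ _i : Fin d, w u ^ (-(s / d)) := by
    rw [Finset.prod_const, Finset.card_fin, ← ENNReal.rpow_natCast, ← ENNReal.rpow_mul]
    field_simp
  rw [hsplit]
  refine Finset.prod_le_prod' fun i _ => ?_
  rw [← ENNReal.ofReal_rpow_of_pos (by positivity)]
  exact ENNReal.rpow_neg_le_rpow_neg (by positivity)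
    (ENNReal.ofReal_le_ofReal (by linarith [abs_le_znorm u i]))

lemma tsum_w_rpow_neg_ne_top {s : ℝ} (hs : (d : ℝ) < s) : ∑' u : V d, w u ^ (-s) ≠ ⊤ := by
  rcases eq_or_ne d 0 with rfl | hd
  · simp [tsum_fintype, w_ne_zero, w_ne_top]
  have hp : 1 < s / d := (one_lt_div (by positivity)).mpr hs
  have hsum : ∑' k : ℤ, ENNReal.ofReal ((|(k : ℝ)| + 1) ^ (-(s / d))) ≠ ⊤ := by
    rw [← ENNReal.ofReal_tsum_of_nonneg (fun k => by positivity)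
      (summable_abs_add_one_rpow_neg hp)]
    exact ENNReal.ofReal_ne_top
  refine ne_top_of_le_ne_top (ENNReal.pow_ne_top (n := d) hsum) ?_
  rw [← ENNReal.tsum_pi_prod_eq_pow]
  exact ENNReal.tsum_le_tsum (w_rpow_neg_le_prod hd (by linarith [d.cast_nonneg (α := ℝ)]))

lemma Sbar_le_two_mul_tsum (q : ℝ) : Sbar d q ≤ 2 * ∑' u : V d, w u ^ (-(2 * q)) := by
  refine iSup_le fun x => ?_
  calc ∑' y : V d, w y ^ (-q) * w (x - y) ^ (-q)
      ≤ ∑' y : V d, (w y ^ (-(2 * q)) + w (x - y) ^ (-(2 * q))) := by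
        refine ENNReal.tsum_le_tsum fun y => ?_
        simpa only [w_rpow_neg_two_mul] using ENNReal.mul_le_mul_self_add_mul_self _ _
    _ = 2 * ∑' u : V d, w u ^ (-(2 * q)) := by
        have hshift := (Equiv.subLeft x).tsum_eq fun u => w u ^ (-(2 * q))
        simp only [Equiv.subLeft_apply] at hshift
        rw [ENNReal.tsum_add, hshift]
        exact (two_mul _).symm

lemma Sbar_ne_top {q : ℝ} (hq : (d : ℝ) / 2 < q) : Sbar d q ≠ ⊤ :=
  ne_top_of_le_ne_top (ENNReal.mul_ne_top ENNReal.ofNat_ne_top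
    (tsum_w_rpow_neg_ne_top (by linarith))) (Sbar_le_two_mul_tsum q)

end Finiteness

theorem stmt9_general (d : ℕ) (q : ℝ) (hq : (d : ℝ) / 2 < q) :
    Sbar d q ≠ ⊤ ∧
    ∃ C : ℝ, 0 < C ∧ ∀ x y : V d,
      (∑' u : V d, w u ^ (-(2 * q)) * w (x - u) ^ (-q) * w (y - u) ^ (-q)) ≤
        ENNReal.ofReal C * Sbar d q * (w x ^ (-q) * w y ^ (-q)) := by
  have hq0 : 0 ≤ q := (by positivity : (0 : ℝ) ≤ d / 2).trans hq.le
  refine ⟨Sbar_ne_top hq, 4 * 2 ^ q * 2 ^ q, by positivity, fun x y => ?_⟩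
  have hC : ENNReal.ofReal (4 * 2 ^ q * 2 ^ q) = 4 * 2 ^ q * 2 ^ q := by
    rw [ENNReal.ofReal_mul (by positivity), ENNReal.ofReal_mul (by norm_num),
      ← ENNReal.ofReal_rpow_of_pos two_pos]
    simp
  have hpoint : ∀ u : V d, w u ^ (-(2 * q)) * w (x - u) ^ (-q) * w (y - u) ^ (-q) ≤
      2 ^ q * w x ^ (-q) * (2 ^ q * w y ^ (-q)) *
        ((w u ^ (-q) + w (x - u) ^ (-q)) * (w u ^ (-q) + w (y - u) ^ (-q))) := fun u => by
    rw [w_rpow_neg_two_mul]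
    calc _ = w u ^ (-q) * w (x - u) ^ (-q) * (w u ^ (-q) * w (y - u) ^ (-q)) := by ring
      _ ≤ _ := (mul_le_mul' (ENNReal.rpow_neg_mul_rpow_neg_le hq0 (w_le_add_w_sub x u))
          (ENNReal.rpow_neg_mul_rpow_neg_le hq0 (w_le_add_w_sub y u))).trans_eq (by ring)
  calc _ ≤ _ := ENNReal.tsum_le_tsum hpoint
    _ = _ := ENNReal.tsum_mul_left
    _ ≤ 2 ^ q * w x ^ (-q) * (2 ^ q * w y ^ (-q)) * (4 * Sbar d q) :=
        mul_le_mul_right (tsum_add_mul_add_le_four_mul_Sbar q x y) _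
    _ = _ := by rw [hC]; ring

theorem stmt9 (d : ℕ) (hd : 1 ≤ d) (q : ℝ) (hq : (d : ℝ) / 2 < q) :
    Sbar d q ≠ ⊤ ∧
    ∃ C : ℝ, 0 < C ∧ ∀ x y : V d,
      (∑' u : V d, w u ^ (-(2 * q)) * w (x - u) ^ (-q) * w (y - u) ^ (-q)) ≤
        ENNReal.ofReal C * Sbar d q * (w x ^ (-q) * w y ^ (-q)) :=
  stmt9_general d q hq
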